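/- arXiv:2305.12601 — 2 statements merged into one kernel-verified Lean document; each statement's English description precedes it below -/
import Mathlib

section
/- If a star-free expression E of size n + 1 denotes a non-empty language, then that language contains a word of length at most tower(n), where tower(0) = 1 and tower(k+1) = 2^tower(k). -/
/-- Star-free expressions over an alphabet `α`. -/
inductive SF (α : Type*) : Type _
  | empty : SF α
  | eps : SF α
  | ltr : α → SF α
  | union : SF α → SF α → SF α
  | conc : SF α → SF α → SF α
  | compl : SF α → SF α

namespace SF

variable {α : Type*}

/-- The language denoted by a star-free expression. -/
def lang : SF α → Set (List α)
  | empty => ∅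
  | eps => {[]}
  | ltr a => {[a]}
  | union e f => lang e ∪ lang f
  | conc e f => {w | ∃ v ∈ lang e, ∃ u ∈ lang f, w = v ++ u}
  | compl e => (lang e)ᶜ

/-- Size: number of nodes of the syntax tree. -/
def size : SF α → Nat
  | empty => 1
  | eps => 1
  | ltr _ => 1
  | union e f => 1 + size e + size f
  | conc e f => 1 + size e + size f
  | compl e => 1 + size e

end SF

/-- `tower 0 = 1`, `tower (k+1) = 2 ^ tower k`. -/
def tower : Nat → Nat
  | 0 => 1
  | k + 1 => 2 ^ tower k

/-! Every one-letter quotient `a⁻¹⟦E⟧` is recognised by one common NFA, from varying start sets,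
with at most `tower (size E - 1)` states: a letter needs one state, union and concatenation add
the state sets (`tower m + tower n ≤ tower (m + n + 1)`), and complementation determinises, which
costs one exponential. An NFA with `k` states that accepts something from a set of states accepts
a word of length `< k` from it, so a nonempty `⟦E⟧` contains `[]` or a word `a :: v` with
`v.length < k`. -/

namespace Language

variable {α : Type*} {l m : Language α} {a : α} {w : List α}

theorem nil_mem_mul : [] ∈ l * m ↔ [] ∈ l ∧ [] ∈ m := by
  simp [mem_mul, List.append_eq_nil_iff]

theorem cons_mem_mul :
    a :: w ∈ l * m ↔ ([] ∈ l ∧ a :: w ∈ m) ∨ w ∈ l.leftQuotient [a] * m := by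
  simp only [mem_mul, mem_leftQuotient, List.append_eq_cons_iff]
  constructor
  · rintro ⟨u, hu, v, hv, ⟨rfl, rfl⟩ | ⟨u', rfl, rfl⟩⟩
    · exact .inl ⟨hu, hv⟩
    · exact .inr ⟨u', hu, v, hv, rfl⟩
  · rintro (⟨hu, hv⟩ | ⟨u', hu, v, hv, rfl⟩)
    · exact ⟨[], hu, a :: w, hv, .inl ⟨rfl, rfl⟩⟩
    · exact ⟨a :: u', hu, v, hv, .inr ⟨u', rfl, rfl⟩⟩

end Language

namespace NFA

variable {α σ τ : Type*}

theorem evalFrom_empty (M : NFA α σ) (w : List α) : M.evalFrom ∅ w = ∅ := by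
  induction w with
  | nil => rfl
  | cons a w ih => rwa [evalFrom_cons, stepSet_empty]

theorem acceptsFrom_toDFA (M : NFA α σ) (S : Set σ) :
    M.toDFA.acceptsFrom S = M.acceptsFrom S := by
  ext w
  simp only [DFA.mem_acceptsFrom, mem_acceptsFrom, toDFA]
  exact ⟨fun ⟨s, hw, hs⟩ => ⟨s, hs, hw⟩, fun ⟨s, hs, hw⟩ => ⟨s, hw, hs⟩⟩

section ShortWord

variable (M : NFA α σ) {S : Set σ} {u v w : List α}

theorem append_mem_acceptsFrom_iff_exists :
    u ++ v ∈ M.acceptsFrom S ↔ ∃ p ∈ M.evalFrom S u, v ∈ M.acceptsFrom {p} := by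
  rw [append_mem_acceptsFrom]
  simp only [mem_acceptsFrom]
  constructor
  · rintro ⟨s, hs, hsv⟩
    obtain ⟨p, hp, hps⟩ := mem_evalFrom_iff_exists.1 hsv
    exact ⟨p, hp, s, hs, hps⟩
  · rintro ⟨p, hp, s, hs, hps⟩
    exact ⟨s, hs, mem_evalFrom_iff_exists.2 ⟨p, hp, hps⟩⟩

theorem exists_shorter_mem_acceptsFrom [Fintype σ] (hw : w ∈ M.acceptsFrom S)
    (hlen : Fintype.card σ ≤ w.length) : ∃ v ∈ M.acceptsFrom S, v.length < w.length := by
  have hsplit (i : Fin (w.length + 1)) :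
      ∃ p ∈ M.evalFrom S (w.take i), w.drop i ∈ M.acceptsFrom {p} := by
    rw [← append_mem_acceptsFrom_iff_exists, List.take_append_drop]
    exact hw
  choose p hp_reach hp_accept using hsplit
  -- a run of `w` visits `w.length + 1` states, so one of them repeats; cut out the loop
  have cut {i j : Fin (w.length + 1)} (hij : i < j) (hpij : p i = p j) :
      ∃ v ∈ M.acceptsFrom S, v.length < w.length := by
    refine ⟨w.take i ++ w.drop j, ?_, ?_⟩
    · exact M.append_mem_acceptsFrom_iff_exists.2 ⟨p i, hp_reach i, hpij ▸ hp_accept j⟩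
    · have := j.is_lt
      simp only [List.length_append, List.length_take, List.length_drop]
      omega
  obtain ⟨i, j, hne, hpij⟩ := Fintype.exists_ne_map_eq_of_card_lt p (by simpa using hlen)
  rcases hne.lt_or_gt with hij | hji
  · exact cut hij hpij
  · exact cut hji hpij.symm

theorem exists_mem_acceptsFrom_length_lt [Fintype σ] (hw : w ∈ M.acceptsFrom S) :
    ∃ v ∈ M.acceptsFrom S, v.length < Fintype.card σ := by
  induction hn : w.length using Nat.strong_induction_on generalizing w with
  | _ n ih =>
    by_cases hlen : w.length < Fintype.card σ
    · exact ⟨w, hw, hlen⟩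
    · obtain ⟨v, hv, hvw⟩ := M.exists_shorter_mem_acceptsFrom hw (not_lt.1 hlen)
      exact ih v.length (hn ▸ hvw) hv rfl

end ShortWord

theorem evalFrom_image {M : NFA α σ} {N : NFA α τ} {f : σ → τ}
    (hstep : ∀ s a, N.step (f s) a = f '' M.step s a) (S : Set σ) (w : List α) :
    N.evalFrom (f '' S) w = f '' M.evalFrom S w := by
  induction w generalizing S with
  | nil => rfl
  | cons a w ih =>
    have hstepSet : N.stepSet (f '' S) a = f '' M.stepSet S a := by
      simp only [stepSet, Set.biUnion_image, hstep, Set.image_iUnion₂]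
    rw [evalFrom_cons, evalFrom_cons, hstepSet, ih]

theorem acceptsFrom_image {M : NFA α σ} {N : NFA α τ} {f : σ → τ}
    (hstep : ∀ s a, N.step (f s) a = f '' M.step s a)
    (haccept : ∀ s, f s ∈ N.accept ↔ s ∈ M.accept) (S : Set σ) :
    N.acceptsFrom (f '' S) = M.acceptsFrom S := by
  ext w
  simp [mem_acceptsFrom, evalFrom_image hstep, haccept]

def sum (M₁ : NFA α σ) (M₂ : NFA α τ) : NFA α (σ ⊕ τ) where
  step := Sum.elim (fun p a => Sum.inl '' M₁.step p a) (fun q a => Sum.inr '' M₂.step q a)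
  start := Sum.inl '' M₁.start ∪ Sum.inr '' M₂.start
  accept := Sum.inl '' M₁.accept ∪ Sum.inr '' M₂.accept

theorem acceptsFrom_sum (M₁ : NFA α σ) (M₂ : NFA α τ) (S : Set σ) (T : Set τ) :
    (M₁.sum M₂).acceptsFrom (Sum.inl '' S ∪ Sum.inr '' T) =
      M₁.acceptsFrom S + M₂.acceptsFrom T := by
  rw [acceptsFrom_union, acceptsFrom_image (fun _ _ => rfl) (by simp [sum]),
    acceptsFrom_image (fun _ _ => rfl) (by simp [sum])]

/-- `M₁` followed by a language `L` with `a⁻¹L` recognised by `M₂` from `T a`: an accepting state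
of `M₁` may jump into `T a` on reading `a`, and stays accepting iff `nil` (meant: `[] ∈ L`). -/
def concat (M₁ : NFA α σ) (M₂ : NFA α τ) (T : α → Set τ) (nil : Prop) : NFA α (σ ⊕ τ) where
  step := Sum.elim (fun p a => Sum.inl '' M₁.step p a ∪ ⋃ (_ : p ∈ M₁.accept), Sum.inr '' T a)
    (fun q a => Sum.inr '' M₂.step q a)
  start := Sum.inl '' M₁.start
  accept := Sum.inr '' M₂.accept ∪ ⋃ (_ : nil), Sum.inl '' M₁.accept

theorem acceptsFrom_concat_inr (M₁ : NFA α σ) (M₂ : NFA α τ) (T : α → Set τ) (nil : Prop)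
    (R : Set τ) : (M₁.concat M₂ T nil).acceptsFrom (Sum.inr '' R) = M₂.acceptsFrom R :=
  acceptsFrom_image (fun _ _ => rfl) (by simp [concat]) R

theorem acceptsFrom_concat_inl (M₁ : NFA α σ) (M₂ : NFA α τ) {L : Language α} {T : α → Set τ}
    (hT : ∀ a, L.leftQuotient [a] = M₂.acceptsFrom (T a)) (S : Set σ) :
    (M₁.concat M₂ T ([] ∈ L)).acceptsFrom (Sum.inl '' S) = M₁.acceptsFrom S * L := by
  ext w
  induction w generalizing S with
  | nil => simp [Language.nil_mem_mul, concat]; tauto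
  | cons a w ih =>
    have hstep : (M₁.concat M₂ T ([] ∈ L)).stepSet (Sum.inl '' S) a =
        Sum.inl '' M₁.stepSet S a ∪ ⋃ (_ : ∃ p ∈ S, p ∈ M₁.accept), Sum.inr '' T a := by
      ext t; simp [mem_stepSet, concat]; aesop
    have hquot : (M₁.acceptsFrom S).leftQuotient [a] = M₁.acceptsFrom (M₁.stepSet S a) :=
      M₁.cons_preimage_acceptsFrom
    have hL : a :: w ∈ L ↔ w ∈ M₂.acceptsFrom (T a) := by rw [← hT]; rfl
    rw [cons_mem_acceptsFrom, hstep, Language.cons_mem_mul, nil_mem_acceptsFrom, hquot, ← ih, hL]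
    by_cases hS : ∃ p ∈ S, p ∈ M₁.accept <;>
      simp [hS, acceptsFrom_union, acceptsFrom_concat_inr, Language.mem_add, or_comm]

end NFA

theorem DFA.acceptsFrom_toNFA {α σ : Type*} (M : DFA α σ) (s : σ) :
    M.toNFA.acceptsFrom {s} = M.acceptsFrom s := by
  ext w
  simp [NFA.mem_acceptsFrom, DFA.mem_acceptsFrom]

namespace Language

variable {α : Type*} {L L₁ L₂ : Language α} {k k₁ k₂ : ℕ}

/-- Recognising the one-letter quotients of `L`, rather than `L` itself, spends no state on the
empty prefix: a single letter costs one state, and the tower bound comes out exactly. -/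
def HasTailNFA (L : Language α) (k : ℕ) : Prop :=
  ∃ (σ : Type) (_ : Fintype σ) (M : NFA α σ) (S : α → Set σ),
    Fintype.card σ ≤ k ∧ ∀ a, L.leftQuotient [a] = M.acceptsFrom (S a)

theorem HasTailNFA.exists_mem_length_le (h : L.HasTailNFA k) (hL : L.Nonempty) :
    ∃ w ∈ L, w.length ≤ k := by
  obtain ⟨σ, _, M, S, hcard, hS⟩ := h
  obtain ⟨_ | ⟨a, w⟩, hw⟩ := hL
  · exact ⟨[], hw, Nat.zero_le k⟩
  · have hw' : w ∈ M.acceptsFrom (S a) := by rw [← hS a]; exact hw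
    obtain ⟨v, hv, hvlen⟩ := M.exists_mem_acceptsFrom_length_lt hw'
    have hv' : v ∈ L.leftQuotient [a] := by rwa [hS a]
    exact ⟨a :: v, hv', by simp only [List.length_cons]; omega⟩

theorem hasTailNFA_zero_of_forall_eq_nil (h : ∀ w ∈ L, w = []) : L.HasTailNFA 0 := by
  refine ⟨Empty, inferInstance, default, fun _ => ∅, le_rfl, fun a => ?_⟩
  ext w
  simp only [mem_leftQuotient, NFA.mem_acceptsFrom, IsEmpty.exists_iff, iff_false]
  exact fun hw => List.cons_ne_nil _ _ (h _ hw)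

theorem hasTailNFA_one_of_forall_length_le_one (h : ∀ w ∈ L, w.length ≤ 1) :
    L.HasTailNFA 1 := by
  refine ⟨Unit, inferInstance, ⟨fun _ _ => ∅, ∅, Set.univ⟩, fun a => {_u | [a] ∈ L},
    le_of_eq Fintype.card_unit, fun a => ?_⟩
  ext (_ | ⟨c, w⟩)
  · simp [mem_leftQuotient]
  · have hlong : a :: c :: w ∉ L := fun hw => by simpa using h _ hw
    simp [mem_leftQuotient, hlong, NFA.mem_acceptsFrom, NFA.stepSet, NFA.evalFrom_empty]

theorem HasTailNFA.add (h₁ : L₁.HasTailNFA k₁) (h₂ : L₂.HasTailNFA k₂) :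
    (L₁ + L₂).HasTailNFA (k₁ + k₂) := by
  obtain ⟨σ, _, M₁, S₁, hcard₁, hS₁⟩ := h₁
  obtain ⟨τ, _, M₂, S₂, hcard₂, hS₂⟩ := h₂
  refine ⟨σ ⊕ τ, inferInstance, M₁.sum M₂, fun a => Sum.inl '' S₁ a ∪ Sum.inr '' S₂ a,
    by rw [Fintype.card_sum]; omega, fun a => ?_⟩
  rw [NFA.acceptsFrom_sum, ← hS₁, ← hS₂]
  rfl

theorem HasTailNFA.mul (h₁ : L₁.HasTailNFA k₁) (h₂ : L₂.HasTailNFA k₂) :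
    (L₁ * L₂).HasTailNFA (k₁ + k₂) := by
  obtain ⟨σ, _, M₁, S₁, hcard₁, hS₁⟩ := h₁
  obtain ⟨τ, _, M₂, S₂, hcard₂, hS₂⟩ := h₂
  refine ⟨σ ⊕ τ, inferInstance, M₁.concat M₂ S₂ ([] ∈ L₂),
    fun a => Sum.inl '' S₁ a ∪ ⋃ (_ : [] ∈ L₁), Sum.inr '' S₂ a,
    by rw [Fintype.card_sum]; omega, fun a => ?_⟩
  ext w
  have hL₂ : a :: w ∈ L₂ ↔ w ∈ M₂.acceptsFrom (S₂ a) := by rw [← hS₂]; rfl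
  rw [mem_leftQuotient, List.singleton_append, cons_mem_mul, hS₁,
    ← NFA.acceptsFrom_concat_inl M₁ M₂ hS₂, hL₂]
  by_cases hnil : [] ∈ L₁ <;>
    simp [hnil, NFA.acceptsFrom_concat_inr, mem_add, or_comm]

theorem HasTailNFA.compl (h : L.HasTailNFA k) : Lᶜ.HasTailNFA (2 ^ k) := by
  classical
  obtain ⟨σ, _, M, S, hcard, hS⟩ := h
  refine ⟨Set σ, inferInstance, (M.toDFA)ᶜ.toNFA, fun a => {S a},
    by rw [Fintype.card_set]; exact Nat.pow_le_pow_right two_pos hcard, fun a => ?_⟩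
  rw [DFA.acceptsFrom_toNFA, DFA.acceptsFrom_compl, NFA.acceptsFrom_toDFA, ← hS]
  rfl

end Language

theorem tower_mono : Monotone tower :=
  monotone_nat_of_le_succ fun _ => Nat.lt_two_pow_self.le

theorem one_le_tower : ∀ n, 1 ≤ tower n
  | 0 => le_rfl
  | _ + 1 => Nat.one_le_two_pow

theorem tower_add_le (m n : ℕ) : tower m + tower n ≤ tower (m + n + 1) := by
  set t := tower (m + n)
  have hm : tower m ≤ t := tower_mono (Nat.le_add_right m n)
  have hn : tower n ≤ t := tower_mono (Nat.le_add_left n m)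
  have hhalf : t - 1 < 2 ^ (t - 1) := Nat.lt_two_pow_self
  calc tower m + tower n ≤ 2 * 2 ^ (t - 1) := by omega
    _ = tower (m + n + 1) := by rw [← pow_succ', Nat.sub_add_cancel (one_le_tower _)]; rfl

namespace SF

variable {α : Type*}

/-- The number of states of the NFA built for `E` in `hasTailNFA_lang`. -/
def tailStates : SF α → ℕ
  | empty => 0
  | eps => 0
  | ltr _ => 1
  | union e f => tailStates e + tailStates f
  | conc e f => tailStates e + tailStates f
  | compl e => 2 ^ tailStates e

theorem hasTailNFA_lang (E : SF α) : Language.HasTailNFA E.lang E.tailStates := by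
  induction E with
  | empty => exact Language.hasTailNFA_zero_of_forall_eq_nil fun _ hw => hw.elim
  | eps => exact Language.hasTailNFA_zero_of_forall_eq_nil fun _ hw => hw
  | ltr a => exact Language.hasTailNFA_one_of_forall_length_le_one fun _ hw =>
      (congrArg List.length (hw : _ = [a])).le
  | union e f ihe ihf => exact ihe.add ihf
  | conc e f ihe ihf =>
    have hlang : (conc e f).lang = Set.image2 (· ++ ·) e.lang f.lang := by
      ext w
      simp only [lang, Set.mem_image2, Set.mem_ofPred_eq, eq_comm]
    rw [hlang]
    exact ihe.mul ihf
  | compl e ih => exact ih.compl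

theorem one_le_size (E : SF α) : 1 ≤ E.size := by
  cases E <;> simp only [size] <;> omega

theorem tailStates_le_tower (E : SF α) : E.tailStates ≤ tower (E.size - 1) := by
  induction E with
  | empty | eps => exact Nat.zero_le _
  | ltr a => rfl
  | union e f ihe ihf | conc e f ihe ihf =>
    have he := e.one_le_size
    have hf := f.one_le_size
    calc e.tailStates + f.tailStates ≤ tower (e.size - 1) + tower (f.size - 1) :=
          add_le_add ihe ihf
      _ ≤ tower (e.size - 1 + (f.size - 1) + 1) := tower_add_le _ _
      _ ≤ tower (1 + e.size + f.size - 1) := tower_mono (by omega)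
  | compl e ih =>
    have hsize : 1 + e.size - 1 = e.size - 1 + 1 := by have := e.one_le_size; omega
    simp only [tailStates, size, hsize, tower]
    exact Nat.pow_le_pow_right two_pos ih

end SF

theorem sf_nonempty_short_word_general {α : Type*} (E : SF α) (n : Nat)
    (hsize : E.size = n + 1) (hne : E.lang.Nonempty) :
    ∃ w ∈ E.lang, w.length ≤ tower n := by
  obtain ⟨w, hw, hlen⟩ := E.hasTailNFA_lang.exists_mem_length_le hne
  refine ⟨w, hw, hlen.trans ?_⟩
  simpa [hsize] using E.tailStates_le_tower

/-- if a star-free expression of size `n + 1` over a finite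
alphabet denotes a non-empty language, then that language contains a word of
length at most `tower n`. -/
theorem sf_nonempty_short_word {α : Type*} [Fintype α] (E : SF α) (n : Nat)
    (hsize : E.size = n + 1) (hne : E.lang.Nonempty) :
    ∃ w ∈ E.lang, w.length ≤ tower n :=
  sf_nonempty_short_word_general E n hsize hne
end

section
/- Define the sequence of string functions f₀(x) = x and f_{n+1}(x) = x · f_n(c₁x) · ... · f_n(c_k x) over an alphabet Σ ∪ {#} with Σ = {c₁, ..., c_k}. Then for every n ∈ ℕ, the string f_n(#) contains, as factors between consecutive # symbols (and before the first and after the last #), every word over Σ of length at most n. -/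
/-- Strings over `Σ ∪ {#}` with `Σ = Fin k`: the separator `#` is `none`,
letters are `some c`. The sequence `f₀(x) = x`,
`f_{n+1}(x) = x · f_n(c₁x) · ... · f_n(cₖx)`. -/
def fSeq (k : Nat) : Nat → List (Option (Fin k)) → List (Option (Fin k))
  | 0, x => x
  | n + 1, x => x ++ (List.ofFn fun c : Fin k => fSeq k n (some c :: x)).flatten

/-!
Unfolding the recursion, `f_n(x)` is the concatenation of the strings `u · x` where `u` runs
through a list `wordsUpTo k n` of words over `Σ` that contains every word of length at most `n`
(a word `u c` arises from the summand `f_{n-1}(c x)`). For `x = #` these strings are the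
`#`-terminated blocks `u #`, so splitting at `#` recovers the words themselves.
-/

theorem List.splitOn_flatten_map_append_singleton {α : Type*} [BEq α] [LawfulBEq α] {a : α}
    (L : List (List α)) (h : ∀ l ∈ L, a ∉ l) :
    (L.map (· ++ [a])).flatten.splitOn a = L ++ [[]] := by
  induction L with
  | nil => rfl
  | cons l L ih =>
    rw [List.forall_mem_cons] at h
    rw [List.map_cons, List.flatten_cons, List.append_assoc, List.singleton_append,
      List.splitOn_append_cons_self_of_not_mem h.1, ih h.2, List.cons_append]

def wordsUpTo (k : ℕ) : ℕ → List (List (Fin k))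
  | 0 => [[]]
  | n + 1 => [] :: (List.ofFn fun c => (wordsUpTo k n).map (· ++ [c])).flatten

theorem mem_wordsUpTo_of_length_le {k n : ℕ} {w : List (Fin k)} (hw : w.length ≤ n) :
    w ∈ wordsUpTo k n := by
  induction n generalizing w with
  | zero => simp_all [wordsUpTo]
  | succ n ih =>
    rcases w.eq_nil_or_concat' with rfl | ⟨u, c, rfl⟩
    · exact List.mem_cons_self
    · have hu : u ∈ wordsUpTo k n := ih (by simpa using hw)
      simp only [wordsUpTo, List.mem_cons, List.mem_flatten, List.mem_ofFn]
      exact Or.inr ⟨_, ⟨c, rfl⟩, List.mem_map_of_mem hu⟩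

theorem fSeq_eq_flatten_wordsUpTo (k n : ℕ) (x : List (Option (Fin k))) :
    fSeq k n x = ((wordsUpTo k n).map fun u => u.map some ++ x).flatten := by
  induction n generalizing x with
  | zero => simp [fSeq, wordsUpTo]
  | succ n ih =>
    simp [fSeq, wordsUpTo, ih, List.map_flatten, List.flatten_flatten, List.map_ofFn,
      Function.comp_def]

/-- for every `n`, every word `w` over `Σ` of length at most `n`
occurs as an entry of the `#`-separated list encoded by `f_n(#)`, i.e. as a
maximal `#`-free factor of `f_n(#)`. -/
theorem fSeq_contains_all_short_words (k n : Nat) (w : List (Fin k))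
    (hw : w.length ≤ n) : w.map some ∈ (fSeq k n [none]).splitOn none := by
  have hblocks : fSeq k n [none] =
      (((wordsUpTo k n).map (List.map some)).map (· ++ [none])).flatten := by
    rw [fSeq_eq_flatten_wordsUpTo, List.map_map]
    rfl
  rw [hblocks, List.splitOn_flatten_map_append_singleton _ (by simp)]
  exact List.mem_append_left _ (List.mem_map_of_mem (mem_wordsUpTo_of_length_le hw))
end
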